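/- Let f ∈ C^k([0,1]) for k ∈ {2,3,4,5}, γ ≤ f⁽ᵏ⁾(x) for all x ∈ [0,1], and S = f⁽ᵏ⁻¹⁾(1) - f⁽ᵏ⁻¹⁾(0). Then the remainder R_k(f) of the corrected Simpson rule satisfies |R_k(f)| ≤ (S - γ)·B_k, where B₂ = 1/40, B₃ = 7/20250 + 19√19/81000, B₄ = 1/5760, B₅ = 1/58320. -/

import Mathlib

open MeasureTheory

/-- The constants `B_k` from the paper. -/
noncomputable def peanoB : ℕ → ℝ
  | 2 => 1 / 40
  | 3 => 7 / 20250 + 19 * Real.sqrt 19 / 81000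
  | 4 => 1 / 5760
  | 5 => 1 / 58320
  | _ => 0

section Aux

lemma uD : UniqueDiffOn ℝ (Set.Icc (0:ℝ) 1) := uniqueDiffOn_Icc (by norm_num)

lemma stepF {k j : ℕ} (hjk : j < k) {f : ℝ → ℝ} (hf : ContDiffOn ℝ k f (Set.Icc 0 1))
    {x : ℝ} (hx : x ∈ Set.Icc (0:ℝ) 1) :
    HasDerivWithinAt (iteratedDerivWithin j f (Set.Icc 0 1))
      (iteratedDerivWithin (j+1) f (Set.Icc 0 1) x) (Set.Icc 0 1) x := by
  have hd := (hf.differentiableOn_iteratedDerivWithin (by exact_mod_cast hjk) uD) x hx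
  have h2 := hd.hasDerivWithinAt
  rwa [← iteratedDerivWithin_succ] at h2

lemma ftc {g g' : ℝ → ℝ} {a b : ℝ} (h0 : (0:ℝ) ≤ a) (hab : a ≤ b) (hb : b ≤ 1)
    (hg : ∀ x ∈ Set.Icc (0:ℝ) 1, HasDerivWithinAt g (g' x) (Set.Icc 0 1) x)
    (hc : ContinuousOn g' (Set.Icc a b)) :
    ∫ x in a..b, g' x = g b - g a := by
  apply intervalIntegral.integral_eq_sub_of_hasDeriv_right_of_le hab
  · intro x hx
    exact ((hg x (Set.Icc_subset_Icc h0 hb hx)).continuousWithinAt).mono (Set.Icc_subset_Icc h0 hb)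
  · intro x hx
    have hx01 : x ∈ Set.Ioo (0:ℝ) 1 := ⟨lt_of_le_of_lt h0 hx.1, lt_of_lt_of_le hx.2 hb⟩
    exact ((hg x (Set.Ioo_subset_Icc_self hx01)).hasDerivAt
      (Icc_mem_nhds hx01.1 hx01.2)).hasDerivWithinAt
  · exact hc.intervalIntegrable_of_Icc hab

lemma piece (k : ℕ) (hk : 1 ≤ k) (f : ℝ → ℝ) (hf : ContDiffOn ℝ k f (Set.Icc 0 1))
    (p : ℕ → ℝ → ℝ) (hp0 : p 0 = fun _ => 1)
    (hp : ∀ j < k, ∀ x, HasDerivAt (p (j+1)) (p j x) x)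
    (a b : ℝ) (h0 : 0 ≤ a) (hab : a ≤ b) (hb : b ≤ 1) :
    ∫ x in a..b, f x =
      (∑ j ∈ Finset.range k, (-1:ℝ)^j * p (j+1) b * iteratedDerivWithin j f (Set.Icc 0 1) b)
      - (∑ j ∈ Finset.range k, (-1:ℝ)^j * p (j+1) a * iteratedDerivWithin j f (Set.Icc 0 1) a)
      + (-1:ℝ)^k * ∫ x in a..b, p k x * iteratedDerivWithin k f (Set.Icc 0 1) x := by
  set F : ℕ → ℝ → ℝ := fun j => iteratedDerivWithin j f (Set.Icc 0 1) with hF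
  have hG : ∀ x ∈ Set.Icc (0:ℝ) 1,
      HasDerivWithinAt (fun y => ∑ j ∈ Finset.range k, (-1:ℝ)^j * p (j+1) y * F j y)
        (f x - (-1:ℝ)^k * p k x * F k x) (Set.Icc 0 1) x := by
    intro x hx
    have hterm : ∀ j ∈ Finset.range k,
        HasDerivWithinAt (fun y => (-1:ℝ)^j * p (j+1) y * F j y)
          ((-1:ℝ)^j * p j x * F j x - (-1:ℝ)^(j+1) * p (j+1) x * F (j+1) x)
          (Set.Icc 0 1) x := by
      intro j hj
      have hj' := Finset.mem_range.mp hj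
      have h1 : HasDerivWithinAt (fun y => (-1:ℝ)^j * p (j+1) y) ((-1:ℝ)^j * p j x)
          (Set.Icc 0 1) x := (((hp j hj' x).const_mul ((-1:ℝ)^j))).hasDerivWithinAt
      have h2 := stepF hj' hf hx
      have h3 := h1.fun_mul h2
      refine h3.congr_deriv ?_
      rw [pow_succ]
      ring
    have hsum := HasDerivWithinAt.fun_sum hterm
    have hts : ∑ j ∈ Finset.range k,
        ((-1:ℝ)^j * p j x * F j x - (-1:ℝ)^(j+1) * p (j+1) x * F (j+1) x)
        = (-1:ℝ)^0 * p 0 x * F 0 x - (-1:ℝ)^k * p k x * F k x :=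
      Finset.sum_range_sub' (fun j => (-1:ℝ)^j * p j x * F j x) k
    rw [hts] at hsum
    simpa [hp0, hF] using hsum
  have hkpos : 0 < k := hk
  obtain ⟨k0, rfl⟩ : ∃ m, k = m + 1 := ⟨k - 1, (Nat.succ_pred_eq_of_pos hkpos).symm⟩
  have hpdiff : Differentiable ℝ (p (k0+1)) := fun x => (hp k0 (by omega) x).differentiableAt
  have hFkc : ContinuousOn (F (k0+1)) (Set.Icc 0 1) :=
    hf.continuousOn_iteratedDerivWithin le_rfl uD
  have hsub : Set.Icc a b ⊆ Set.Icc (0:ℝ) 1 := Set.Icc_subset_Icc h0 hb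
  have hprodc : ContinuousOn (fun x => p (k0+1) x * F (k0+1) x) (Set.Icc a b) :=
    (hpdiff.continuous.continuousOn).mul (hFkc.mono hsub)
  have hfc : ContinuousOn f (Set.Icc a b) := hf.continuousOn.mono hsub
  have hgc : ContinuousOn (fun x => f x - (-1:ℝ)^(k0+1) * p (k0+1) x * F (k0+1) x)
      (Set.Icc a b) := by
    have := (continuousOn_const (c := (-1:ℝ)^(k0+1))).fun_mul hprodc
    exact hfc.sub (by simpa [mul_assoc] using this)
  have key := ftc h0 hab hb hG hgc
  have hint1 : IntervalIntegrable f MeasureTheory.volume a b := hfc.intervalIntegrable_of_Icc hab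
  have hint2 : IntervalIntegrable (fun x => (-1:ℝ)^(k0+1) * (p (k0+1) x * F (k0+1) x))
      MeasureTheory.volume a b :=
    ((continuousOn_const.mul hprodc)).intervalIntegrable_of_Icc hab
  have hsplit : ∫ x in a..b, (f x - (-1:ℝ)^(k0+1) * p (k0+1) x * F (k0+1) x)
      = (∫ x in a..b, f x) - ∫ x in a..b, (-1:ℝ)^(k0+1) * (p (k0+1) x * F (k0+1) x) := by
    rw [← intervalIntegral.integral_sub hint1 hint2]
    congr 1
    funext x
    ring
  rw [hsplit] at key
  rw [intervalIntegral.integral_const_mul] at key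
  simp only [hF] at key
  linarith [key]

noncomputable def pker : ℕ → ℝ → ℝ
  | 0 => fun _ => 1
  | 1 => fun x => x + (-7/30)
  | 2 => fun x => 1/2*x^2 + (-7/30)*x + 1/60
  | 3 => fun x => 1/6*x^3 + (-7/60)*x^2 + 1/60*x
  | 4 => fun x => 1/24*x^4 + (-7/180)*x^3 + 1/120*x^2
  | 5 => fun x => 1/120*x^5 + (-7/720)*x^4 + 1/360*x^3
  | 6 => fun x => 1/720*x^6 + (-7/3600)*x^5 + 1/1440*x^4
  | _ => fun _ => 0

noncomputable def qker : ℕ → ℝ → ℝ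
  | 0 => fun _ => 1
  | 1 => fun x => x + (-23/30)
  | 2 => fun x => 1/2*x^2 + (-23/30)*x + 17/60
  | 3 => fun x => 1/6*x^3 + (-23/60)*x^2 + 17/60*x + (-1/15)
  | 4 => fun x => 1/24*x^4 + (-23/180)*x^3 + 17/120*x^2 + (-1/15)*x + 1/90
  | 5 => fun x => 1/120*x^5 + (-23/720)*x^4 + 17/360*x^3 + (-1/30)*x^2 + 1/90*x + (-1/720)
  | 6 => fun x => 1/720*x^6 + (-23/3600)*x^5 + 17/1440*x^4 + (-1/90)*x^3 + 1/180*x^2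
      + (-1/720)*x + 1/7200
  | _ => fun _ => 0

lemma pker_one : pker 1 = fun x => x + (-7/30) := rfl
lemma pker_two : pker 2 = fun x => 1/2*x^2 + (-7/30)*x + 1/60 := rfl
lemma pker_three : pker 3 = fun x => 1/6*x^3 + (-7/60)*x^2 + 1/60*x := rfl
lemma pker_four : pker 4 = fun x => 1/24*x^4 + (-7/180)*x^3 + 1/120*x^2 := rfl
lemma pker_five : pker 5 = fun x => 1/120*x^5 + (-7/720)*x^4 + 1/360*x^3 := rfl
lemma pker_six : pker 6 = fun x => 1/720*x^6 + (-7/3600)*x^5 + 1/1440*x^4 := rfl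

lemma qker_one : qker 1 = fun x => x + (-23/30) := rfl
lemma qker_two : qker 2 = fun x => 1/2*x^2 + (-23/30)*x + 17/60 := rfl
lemma qker_three : qker 3 = fun x => 1/6*x^3 + (-23/60)*x^2 + 17/60*x + (-1/15) := rfl
lemma qker_four : qker 4 = fun x => 1/24*x^4 + (-23/180)*x^3 + 17/120*x^2 + (-1/15)*x + 1/90 := rfl
lemma qker_five : qker 5 =
    fun x => 1/120*x^5 + (-23/720)*x^4 + 17/360*x^3 + (-1/30)*x^2 + 1/90*x + (-1/720) := rfl
lemma qker_six : qker 6 = fun x => 1/720*x^6 + (-23/3600)*x^5 + 17/1440*x^4 + (-1/90)*x^3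
    + 1/180*x^2 + (-1/720)*x + 1/7200 := rfl

lemma hasDerivAt_poly6 (a b c d e g h x : ℝ) :
    HasDerivAt (fun y : ℝ => a*y^6 + b*y^5 + c*y^4 + d*y^3 + e*y^2 + g*y + h)
      (6*a*x^5 + 5*b*x^4 + 4*c*x^3 + 3*d*x^2 + 2*e*x + g) x := by
  have H := ((((((hasDerivAt_pow 6 x).const_mul a).fun_add
      ((hasDerivAt_pow 5 x).const_mul b)).fun_add
      ((hasDerivAt_pow 4 x).const_mul c)).fun_add
      ((hasDerivAt_pow 3 x).const_mul d)).fun_add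
      ((hasDerivAt_pow 2 x).const_mul e)).fun_add ((hasDerivAt_id' x).const_mul g)
  have H2 := H.add_const h
  refine H2.congr_deriv ?_
  push_cast
  ring

lemma hpker : ∀ j < 6, ∀ x : ℝ, HasDerivAt (pker (j+1)) (pker j x) x := by
  intro j hj x
  interval_cases j
  · rw [pker_one]
    simpa [pker] using (hasDerivAt_id' x).add_const (-7/30)
  · rw [pker_two]
    have := hasDerivAt_poly6 0 0 0 0 (1/2) (-7/30) (1/60) x
    have h2 : (fun y : ℝ => 0*y^6 + 0*y^5 + 0*y^4 + 0*y^3 + 1/2*y^2 + (-7/30)*y + 1/60)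
        = fun y : ℝ => 1/2*y^2 + (-7/30)*y + 1/60 := by funext y; ring
    rw [h2] at this
    convert this using 1
    show x + (-7/30) = _
    ring
  · rw [pker_three]
    have := hasDerivAt_poly6 0 0 0 (1/6) (-7/60) (1/60) 0 x
    have h2 : (fun y : ℝ => 0*y^6 + 0*y^5 + 0*y^4 + 1/6*y^3 + (-7/60)*y^2 + 1/60*y + 0)
        = fun y : ℝ => 1/6*y^3 + (-7/60)*y^2 + 1/60*y := by funext y; ring
    rw [h2] at this
    convert this using 1
    show 1/2*x^2 + (-7/30)*x + 1/60 = _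
    ring
  · rw [pker_four]
    have := hasDerivAt_poly6 0 0 (1/24) (-7/180) (1/120) 0 0 x
    have h2 : (fun y : ℝ => 0*y^6 + 0*y^5 + 1/24*y^4 + (-7/180)*y^3 + 1/120*y^2 + 0*y + 0)
        = fun y : ℝ => 1/24*y^4 + (-7/180)*y^3 + 1/120*y^2 := by funext y; ring
    rw [h2] at this
    convert this using 1
    show 1/6*x^3 + (-7/60)*x^2 + 1/60*x = _
    ring
  · rw [pker_five]
    have := hasDerivAt_poly6 0 (1/120) (-7/720) (1/360) 0 0 0 x
    have h2 : (fun y : ℝ => 0*y^6 + 1/120*y^5 + (-7/720)*y^4 + 1/360*y^3 + 0*y^2 + 0*y + 0)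
        = fun y : ℝ => 1/120*y^5 + (-7/720)*y^4 + 1/360*y^3 := by funext y; ring
    rw [h2] at this
    convert this using 1
    show 1/24*x^4 + (-7/180)*x^3 + 1/120*x^2 = _
    ring
  · rw [pker_six]
    have := hasDerivAt_poly6 (1/720) (-7/3600) (1/1440) 0 0 0 0 x
    have h2 : (fun y : ℝ => 1/720*y^6 + (-7/3600)*y^5 + 1/1440*y^4 + 0*y^3 + 0*y^2 + 0*y + 0)
        = fun y : ℝ => 1/720*y^6 + (-7/3600)*y^5 + 1/1440*y^4 := by funext y; ring
    rw [h2] at this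
    convert this using 1
    show 1/120*x^5 + (-7/720)*x^4 + 1/360*x^3 = _
    ring

lemma hqker : ∀ j < 6, ∀ x : ℝ, HasDerivAt (qker (j+1)) (qker j x) x := by
  intro j hj x
  interval_cases j
  · rw [qker_one]
    simpa [qker] using (hasDerivAt_id' x).add_const (-23/30)
  · rw [qker_two]
    have := hasDerivAt_poly6 0 0 0 0 (1/2) (-23/30) (17/60) x
    have h2 : (fun y : ℝ => 0*y^6 + 0*y^5 + 0*y^4 + 0*y^3 + 1/2*y^2 + (-23/30)*y + 17/60)
        = fun y : ℝ => 1/2*y^2 + (-23/30)*y + 17/60 := by funext y; ring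
    rw [h2] at this
    convert this using 1
    show x + (-23/30) = _
    ring
  · rw [qker_three]
    have := hasDerivAt_poly6 0 0 0 (1/6) (-23/60) (17/60) (-1/15) x
    have h2 : (fun y : ℝ => 0*y^6 + 0*y^5 + 0*y^4 + 1/6*y^3 + (-23/60)*y^2 + 17/60*y + (-1/15))
        = fun y : ℝ => 1/6*y^3 + (-23/60)*y^2 + 17/60*y + (-1/15) := by funext y; ring
    rw [h2] at this
    convert this using 1
    show 1/2*x^2 + (-23/30)*x + 17/60 = _
    ring
  · rw [qker_four]
    have := hasDerivAt_poly6 0 0 (1/24) (-23/180) (17/120) (-1/15) (1/90) x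
    have h2 : (fun y : ℝ =>
          0*y^6 + 0*y^5 + 1/24*y^4 + (-23/180)*y^3 + 17/120*y^2 + (-1/15)*y + 1/90)
        = fun y : ℝ => 1/24*y^4 + (-23/180)*y^3 + 17/120*y^2 + (-1/15)*y + 1/90 := by
      funext y; ring
    rw [h2] at this
    convert this using 1
    show 1/6*x^3 + (-23/60)*x^2 + 17/60*x + (-1/15) = _
    ring
  · rw [qker_five]
    have := hasDerivAt_poly6 0 (1/120) (-23/720) (17/360) (-1/30) (1/90) (-1/720) x
    have h2 : (fun y : ℝ =>
          0*y^6 + 1/120*y^5 + (-23/720)*y^4 + 17/360*y^3 + (-1/30)*y^2 + 1/90*y + (-1/720))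
        = fun y : ℝ => 1/120*y^5 + (-23/720)*y^4 + 17/360*y^3 + (-1/30)*y^2 + 1/90*y + (-1/720)
        := by funext y; ring
    rw [h2] at this
    convert this using 1
    show 1/24*x^4 + (-23/180)*x^3 + 17/120*x^2 + (-1/15)*x + 1/90 = _
    ring
  · rw [qker_six]
    have := hasDerivAt_poly6 (1/720) (-23/3600) (17/1440) (-1/90) (1/180) (-1/720) (1/7200) x
    convert this using 1
    show 1/120*x^5 + (-23/720)*x^4 + 17/360*x^3 + (-1/30)*x^2 + 1/90*x + (-1/720) = _
    ring

lemma pker_contOn (j : ℕ) (hj : 1 ≤ j) (hj6 : j ≤ 6) (s : Set ℝ) : ContinuousOn (pker j) s := by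
  obtain ⟨m, rfl⟩ : ∃ m, j = m + 1 := ⟨j - 1, (Nat.succ_pred_eq_of_pos hj).symm⟩
  exact fun x _ => ((hpker m (by omega) x).differentiableAt.continuousAt).continuousWithinAt

lemma qker_contOn (j : ℕ) (hj : 1 ≤ j) (hj6 : j ≤ 6) (s : Set ℝ) : ContinuousOn (qker j) s := by
  obtain ⟨m, rfl⟩ : ∃ m, j = m + 1 := ⟨j - 1, (Nat.succ_pred_eq_of_pos hj).symm⟩
  exact fun x _ => ((hqker m (by omega) x).differentiableAt.continuousAt).continuousWithinAt

lemma qp_two (x : ℝ) : qker 2 x = pker 2 (1-x) := by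
  simp only [pker_two, qker_two]; ring
lemma qp_three (x : ℝ) : qker 3 x = -pker 3 (1-x) := by
  simp only [pker_three, qker_three]; ring
lemma qp_four (x : ℝ) : qker 4 x = pker 4 (1-x) := by
  simp only [pker_four, qker_four]; ring
lemma qp_five (x : ℝ) : qker 5 x = -pker 5 (1-x) := by
  simp only [pker_five, qker_five]; ring

lemma refl_mem {x : ℝ} (hx : x ∈ Set.Icc (1/2:ℝ) 1) : 1 - x ∈ Set.Icc (0:ℝ) (1/2) :=
  ⟨by linarith [hx.2], by linarith [hx.1]⟩

lemma p2_bound : ∀ x ∈ Set.Icc (0:ℝ) (1/2), |pker 2 x| ≤ 1/40 := by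
  intro x hx
  obtain ⟨h0, h1⟩ := hx
  rw [pker_two, abs_le]
  constructor
  · nlinarith [sq_nonneg (x - 7/30)]
  · nlinarith [mul_nonneg (by linarith : (0:ℝ) ≤ 1 - 2*x) (by linarith : (0:ℝ) ≤ 30*x + 1)]

lemma p3_bound : ∀ x ∈ Set.Icc (0:ℝ) (1/2),
    |pker 3 x| ≤ 7/20250 + 19 * Real.sqrt 19 / 81000 := by
  intro x hx
  obtain ⟨h0, h1⟩ := hx
  set s := Real.sqrt 19 with hs
  have hs2 : s^2 = 19 := Real.sq_sqrt (by norm_num)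
  have hs0 : 0 ≤ s := Real.sqrt_nonneg 19
  have hs4 : (4:ℝ) ≤ s := by nlinarith
  rw [pker_three, abs_le]
  constructor
  · have key : 1/6*x^3 + (-7/60)*x^2 + 1/60*x + (7/20250 + 19*s/81000)
        = (30*x-7-s)^2*(30*x-7+2*s)/162000 := by
      linear_combination ((3*(30*x-7) - 2*s)/162000) * hs2
    have hpos : 0 ≤ (30*x-7-s)^2*(30*x-7+2*s)/162000 :=
      div_nonneg (mul_nonneg (sq_nonneg _) (by nlinarith)) (by norm_num)
    linarith
  · have key : (7/20250 + 19*s/81000) - (1/6*x^3 + (-7/60)*x^2 + 1/60*x)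
        = (30*x-7+s)^2*(7+2*s-30*x)/162000 + 7/10125 := by
      linear_combination ((-3*(30*x-7) - 2*s)/162000) * hs2
    have hpos : 0 ≤ (30*x-7+s)^2*(7+2*s-30*x)/162000 :=
      div_nonneg (mul_nonneg (sq_nonneg _) (by nlinarith)) (by norm_num)
    linarith

lemma p4_bound : ∀ x ∈ Set.Icc (0:ℝ) (1/2), |pker 4 x| ≤ 1/5760 := by
  intro x hx
  obtain ⟨h0, h1⟩ := hx
  rw [pker_four, abs_le]
  constructor
  · have key : (1/24*x^4 + (-7/180)*x^3 + 1/120*x^2) + 1/5760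
        = (2*x-1)^2*(60*x^2+4*x+1)/5760 := by ring
    have hpos : 0 ≤ (2*x-1)^2*(60*x^2+4*x+1)/5760 :=
      div_nonneg (mul_nonneg (sq_nonneg _) (by nlinarith [sq_nonneg x])) (by norm_num)
    linarith
  · nlinarith [mul_nonneg h0 (by linarith : (0:ℝ) ≤ 1/2 - x), sq_nonneg (x*(5*x-1)),
      mul_nonneg (mul_nonneg h0 h0) (by linarith : (0:ℝ) ≤ 1/2 - x), sq_nonneg x,
      mul_nonneg (mul_nonneg (mul_nonneg h0 h0) h0) (by linarith : (0:ℝ) ≤ 1/2 - x)]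

lemma p5_bound : ∀ x ∈ Set.Icc (0:ℝ) (1/2), |pker 5 x| ≤ 1/58320 := by
  intro x hx
  obtain ⟨h0, h1⟩ := hx
  rw [pker_five, abs_le]
  constructor
  · have key : 1/120*x^5 + (-7/720)*x^4 + 1/360*x^3
        = x^3*((1-2*x)*(2-3*x))/720 := by ring
    have hpos : 0 ≤ x^3*((1-2*x)*(2-3*x))/720 :=
      div_nonneg (mul_nonneg (pow_nonneg h0 3)
        (mul_nonneg (by linarith) (by linarith))) (by norm_num)
    linarith
  · have key : 1/58320 - (1/120*x^5 + (-7/720)*x^4 + 1/360*x^3)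
        = (3*x-1)^2*(27*x^2*(1-2*x)+6*x+1)/58320 := by ring
    have hpos : 0 ≤ (3*x-1)^2*(27*x^2*(1-2*x)+6*x+1)/58320 :=
      div_nonneg (mul_nonneg (sq_nonneg _)
        (by nlinarith [mul_nonneg (mul_nonneg h0 h0) (by linarith : (0:ℝ) ≤ 1-2*x)]))
        (by norm_num)
    linarith

lemma q2_bound : ∀ x ∈ Set.Icc (1/2:ℝ) 1, |qker 2 x| ≤ 1/40 := by
  intro x hx; rw [qp_two]; exact p2_bound _ (refl_mem hx)
lemma q3_bound : ∀ x ∈ Set.Icc (1/2:ℝ) 1,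
    |qker 3 x| ≤ 7/20250 + 19 * Real.sqrt 19 / 81000 := by
  intro x hx; rw [qp_three, abs_neg]; exact p3_bound _ (refl_mem hx)
lemma q4_bound : ∀ x ∈ Set.Icc (1/2:ℝ) 1, |qker 4 x| ≤ 1/5760 := by
  intro x hx; rw [qp_four]; exact p4_bound _ (refl_mem hx)
lemma q5_bound : ∀ x ∈ Set.Icc (1/2:ℝ) 1, |qker 5 x| ≤ 1/58320 := by
  intro x hx; rw [qp_five, abs_neg]; exact p5_bound _ (refl_mem hx)

lemma final_bound (k : ℕ) (hk : 1 ≤ k) (f : ℝ → ℝ) (hf : ContDiffOn ℝ k f (Set.Icc 0 1))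
    (γ B : ℝ)
    (hγ : ∀ x ∈ Set.Icc (0:ℝ) 1, γ ≤ iteratedDerivWithin k f (Set.Icc 0 1) x)
    (T U : ℝ → ℝ)
    (hTc : ContinuousOn T (Set.Icc 0 (1/2))) (hUc : ContinuousOn U (Set.Icc (1/2) 1))
    (hTb : ∀ x ∈ Set.Icc (0:ℝ) (1/2), |T x| ≤ B)
    (hUb : ∀ x ∈ Set.Icc (1/2:ℝ) 1, |U x| ≤ B)
    (hz : (∫ x in (0:ℝ)..(1/2), T x) + (∫ x in (1/2:ℝ)..1, U x) = 0) :
    |(∫ x in (0:ℝ)..(1/2), T x * iteratedDerivWithin k f (Set.Icc 0 1) x)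
      + (∫ x in (1/2:ℝ)..1, U x * iteratedDerivWithin k f (Set.Icc 0 1) x)|
    ≤ (iteratedDerivWithin (k-1) f (Set.Icc 0 1) 1
        - iteratedDerivWithin (k-1) f (Set.Icc 0 1) 0 - γ) * B := by
  obtain ⟨m, rfl⟩ : ∃ m, k = m + 1 := ⟨k - 1, (Nat.succ_pred_eq_of_pos hk).symm⟩
  rw [show m + 1 - 1 = m from rfl]
  set Fk : ℝ → ℝ := iteratedDerivWithin (m+1) f (Set.Icc 0 1) with hFk
  set Fm : ℝ → ℝ := iteratedDerivWithin m f (Set.Icc 0 1) with hFm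
  have sub1 : Set.Icc (0:ℝ) (1/2) ⊆ Set.Icc (0:ℝ) 1 := Set.Icc_subset_Icc le_rfl (by norm_num)
  have sub2 : Set.Icc (1/2:ℝ) 1 ⊆ Set.Icc (0:ℝ) 1 := Set.Icc_subset_Icc (by norm_num) le_rfl
  have hFkc : ContinuousOn Fk (Set.Icc 0 1) := hf.continuousOn_iteratedDerivWithin le_rfl uD
  have hB : 0 ≤ B := le_trans (abs_nonneg _) (hTb 0 ⟨le_rfl, by norm_num⟩)
  have hstep : ∀ x ∈ Set.Icc (0:ℝ) 1, HasDerivWithinAt Fm (Fk x) (Set.Icc 0 1) x :=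
    fun x hx => stepF (Nat.lt_succ_self m) hf hx
  have iInt1 : ∫ x in (0:ℝ)..(1/2), Fk x = Fm (1/2) - Fm 0 :=
    ftc le_rfl (by norm_num) (by norm_num) hstep (hFkc.mono sub1)
  have iInt2 : ∫ x in (1/2:ℝ)..1, Fk x = Fm 1 - Fm (1/2) :=
    ftc (by norm_num) (by norm_num) le_rfl hstep (hFkc.mono sub2)
  have cT : ContinuousOn (fun x => T x * (Fk x - γ)) (Set.Icc 0 (1/2)) :=
    hTc.mul ((hFkc.mono sub1).sub continuousOn_const)
  have cU : ContinuousOn (fun x => U x * (Fk x - γ)) (Set.Icc (1/2) 1) :=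
    hUc.mul ((hFkc.mono sub2).sub continuousOn_const)
  have iT : IntervalIntegrable T volume 0 (1/2) := hTc.intervalIntegrable_of_Icc (by norm_num)
  have iU : IntervalIntegrable U volume (1/2) 1 := hUc.intervalIntegrable_of_Icc (by norm_num)
  have igT : IntervalIntegrable (fun x => T x * (Fk x - γ)) volume 0 (1/2) :=
    cT.intervalIntegrable_of_Icc (by norm_num)
  have igU : IntervalIntegrable (fun x => U x * (Fk x - γ)) volume (1/2) 1 :=
    cU.intervalIntegrable_of_Icc (by norm_num)
  have iFk1 : IntervalIntegrable (fun x => Fk x - γ) volume 0 (1/2) :=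
    ((hFkc.mono sub1).sub continuousOn_const).intervalIntegrable_of_Icc (by norm_num)
  have iFk2 : IntervalIntegrable (fun x => Fk x - γ) volume (1/2) 1 :=
    ((hFkc.mono sub2).sub continuousOn_const).intervalIntegrable_of_Icc (by norm_num)
  have e1 : ∫ x in (0:ℝ)..(1/2), T x * Fk x
      = (∫ x in (0:ℝ)..(1/2), T x * (Fk x - γ)) + γ * ∫ x in (0:ℝ)..(1/2), T x := by
    rw [← intervalIntegral.integral_const_mul,
      ← intervalIntegral.integral_add igT (iT.const_mul γ)]
    apply intervalIntegral.integral_congr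
    intro x _
    ring
  have e2 : ∫ x in (1/2:ℝ)..1, U x * Fk x
      = (∫ x in (1/2:ℝ)..1, U x * (Fk x - γ)) + γ * ∫ x in (1/2:ℝ)..1, U x := by
    rw [← intervalIntegral.integral_const_mul,
      ← intervalIntegral.integral_add igU (iU.const_mul γ)]
    apply intervalIntegral.integral_congr
    intro x _
    ring
  have a1 : |∫ x in (0:ℝ)..(1/2), T x * (Fk x - γ)|
      ≤ ∫ x in (0:ℝ)..(1/2), B * (Fk x - γ) := by
    refine le_trans (intervalIntegral.abs_integral_le_integral_abs (by norm_num)) ?_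
    refine intervalIntegral.integral_mono_on (by norm_num)
      (igT.abs) (iFk1.const_mul B) ?_
    intro x hx
    have hge : 0 ≤ Fk x - γ := sub_nonneg.2 (hγ x (sub1 hx))
    rw [abs_mul, abs_of_nonneg hge]
    exact mul_le_mul_of_nonneg_right (hTb x hx) hge
  have a2 : |∫ x in (1/2:ℝ)..1, U x * (Fk x - γ)|
      ≤ ∫ x in (1/2:ℝ)..1, B * (Fk x - γ) := by
    refine le_trans (intervalIntegral.abs_integral_le_integral_abs (by norm_num)) ?_
    refine intervalIntegral.integral_mono_on (by norm_num)
      (igU.abs) (iFk2.const_mul B) ?_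
    intro x hx
    have hge : 0 ≤ Fk x - γ := sub_nonneg.2 (hγ x (sub2 hx))
    rw [abs_mul, abs_of_nonneg hge]
    exact mul_le_mul_of_nonneg_right (hUb x hx) hge
  have v1 : ∫ x in (0:ℝ)..(1/2), B * (Fk x - γ) = B * ((Fm (1/2) - Fm 0) - γ * (1/2)) := by
    rw [intervalIntegral.integral_const_mul, intervalIntegral.integral_sub
      ((hFkc.mono sub1).intervalIntegrable_of_Icc (by norm_num)) intervalIntegrable_const,
      iInt1, intervalIntegral.integral_const]
    congr 1
    rw [smul_eq_mul]
    ring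
  have v2 : ∫ x in (1/2:ℝ)..1, B * (Fk x - γ) = B * ((Fm 1 - Fm (1/2)) - γ * (1/2)) := by
    rw [intervalIntegral.integral_const_mul, intervalIntegral.integral_sub
      ((hFkc.mono sub2).intervalIntegrable_of_Icc (by norm_num)) intervalIntegrable_const,
      iInt2, intervalIntegral.integral_const]
    congr 1
    rw [smul_eq_mul]
    ring
  have hsum : (∫ x in (0:ℝ)..(1/2), T x * Fk x) + (∫ x in (1/2:ℝ)..1, U x * Fk x)
      = (∫ x in (0:ℝ)..(1/2), T x * (Fk x - γ)) + ∫ x in (1/2:ℝ)..1, U x * (Fk x - γ) := by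
    rw [e1, e2]
    linear_combination γ * hz
  rw [hsum]
  have tri := abs_add_le (∫ x in (0:ℝ)..(1/2), T x * (Fk x - γ))
    (∫ x in (1/2:ℝ)..1, U x * (Fk x - γ))
  have hfin : B * ((Fm (1/2) - Fm 0) - γ * (1/2)) + B * ((Fm 1 - Fm (1/2)) - γ * (1/2))
      = (Fm 1 - Fm 0 - γ) * B := by ring
  linarith [a1, a2, tri, v1.le, v1.ge, v2.le, v2.ge]

end Aux

theorem corrected_simpson_error_bound_Bk (k : ℕ) (hk : 2 ≤ k) (hk' : k ≤ 5)
    (f : ℝ → ℝ) (hf : ContDiffOn ℝ k f (Set.Icc 0 1)) (γ : ℝ)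
    (hγ : ∀ x ∈ Set.Icc (0:ℝ) 1, γ ≤ iteratedDerivWithin k f (Set.Icc 0 1) x) :
    |(∫ x in (0:ℝ)..1, f x) -
        (7 * f 0 + 16 * f (1/2) + 7 * f 1) / 30
        + (derivWithin f (Set.Icc 0 1) 1 - derivWithin f (Set.Icc 0 1) 0) / 60|
      ≤ ((iteratedDerivWithin (k - 1) f (Set.Icc 0 1) 1
          - iteratedDerivWithin (k - 1) f (Set.Icc 0 1) 0) - γ) * peanoB k := by
  have sub1 : Set.Icc (0:ℝ) (1/2) ⊆ Set.Icc (0:ℝ) 1 := Set.Icc_subset_Icc le_rfl (by norm_num)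
  have sub2 : Set.Icc (1/2:ℝ) 1 ⊆ Set.Icc (0:ℝ) 1 := Set.Icc_subset_Icc (by norm_num) le_rfl
  have hd1 : derivWithin f (Set.Icc 0 1) 1 = iteratedDerivWithin 1 f (Set.Icc 0 1) 1 :=
    by rw [iteratedDerivWithin_one]
  have hd0 : derivWithin f (Set.Icc 0 1) 0 = iteratedDerivWithin 1 f (Set.Icc 0 1) 0 :=
    by rw [iteratedDerivWithin_one]
  have hfi1 : IntervalIntegrable f volume 0 (1/2) :=
    (hf.continuousOn.mono sub1).intervalIntegrable_of_Icc (by norm_num)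
  have hfi2 : IntervalIntegrable f volume (1/2) 1 :=
    (hf.continuousOn.mono sub2).intervalIntegrable_of_Icc (by norm_num)
  have hsplit := intervalIntegral.integral_add_adjacent_intervals hfi1 hfi2
  rw [hd0, hd1]
  interval_cases k
  · -- k = 2
    have P := piece 2 (by norm_num) f hf pker rfl (fun j hj x => hpker j (by omega) x)
      0 (1/2) le_rfl (by norm_num) (by norm_num)
    have Q := piece 2 (by norm_num) f hf qker rfl (fun j hj x => hqker j (by omega) x)
      (1/2) 1 (by norm_num) (by norm_num) le_rfl
    set IP := ∫ x in (0:ℝ)..(1/2), pker 2 x * iteratedDerivWithin 2 f (Set.Icc 0 1) x with hIP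
    set IQ := ∫ x in (1/2:ℝ)..1, qker 2 x * iteratedDerivWithin 2 f (Set.Icc 0 1) x with hIQ
    simp only [Finset.sum_range_succ, Finset.sum_range_zero, iteratedDerivWithin_zero] at P Q
    norm_num [pker_one, pker_two, qker_one, qker_two] at P Q
    have hzP : ∫ x in (0:ℝ)..(1/2), pker 2 x = pker 3 (1/2) - pker 3 0 :=
      ftc le_rfl (by norm_num) (by norm_num)
        (fun x _ => (hpker 2 (by omega) x).hasDerivWithinAt)
        (pker_contOn 2 (by omega) (by omega) _)
    have hzQ : ∫ x in (1/2:ℝ)..1, qker 2 x = qker 3 1 - qker 3 (1/2) :=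
      ftc (by norm_num) (by norm_num) le_rfl
        (fun x _ => (hqker 2 (by omega) x).hasDerivWithinAt)
        (qker_contOn 2 (by omega) (by omega) _)
    have hz : (∫ x in (0:ℝ)..(1/2), pker 2 x) + (∫ x in (1/2:ℝ)..1, qker 2 x) = 0 := by
      rw [hzP, hzQ]
      norm_num [pker_three, qker_three]
    have FB := final_bound 2 (by norm_num) f hf γ (1/40) hγ (pker 2) (qker 2)
      (pker_contOn 2 (by omega) (by omega) _) (qker_contOn 2 (by omega) (by omega) _)
      p2_bound q2_bound hz
    have hE : (∫ x in (0:ℝ)..1, f x) - (7 * f 0 + 16 * f (1/2) + 7 * f 1) / 30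
        + (iteratedDerivWithin 1 f (Set.Icc 0 1) 1 - iteratedDerivWithin 1 f (Set.Icc 0 1) 0) / 60
        = IP + IQ := by
      linarith [P, Q, hsplit]
    rw [hE]
    have hpB : peanoB 2 = 1/40 := rfl
    rw [show (2:ℕ) - 1 = 1 from rfl, hpB, hIP, hIQ]
    exact FB
  · -- k = 3
    have P := piece 3 (by norm_num) f hf pker rfl (fun j hj x => hpker j (by omega) x)
      0 (1/2) le_rfl (by norm_num) (by norm_num)
    have Q := piece 3 (by norm_num) f hf qker rfl (fun j hj x => hqker j (by omega) x)
      (1/2) 1 (by norm_num) (by norm_num) le_rfl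
    set IP := ∫ x in (0:ℝ)..(1/2), pker 3 x * iteratedDerivWithin 3 f (Set.Icc 0 1) x with hIP
    set IQ := ∫ x in (1/2:ℝ)..1, qker 3 x * iteratedDerivWithin 3 f (Set.Icc 0 1) x with hIQ
    simp only [Finset.sum_range_succ, Finset.sum_range_zero, iteratedDerivWithin_zero] at P Q
    norm_num [pker_one, pker_two, pker_three, qker_one, qker_two, qker_three] at P Q
    have hzP : ∫ x in (0:ℝ)..(1/2), pker 3 x = pker 4 (1/2) - pker 4 0 :=
      ftc le_rfl (by norm_num) (by norm_num)
        (fun x _ => (hpker 3 (by omega) x).hasDerivWithinAt)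
        (pker_contOn 3 (by omega) (by omega) _)
    have hzQ : ∫ x in (1/2:ℝ)..1, qker 3 x = qker 4 1 - qker 4 (1/2) :=
      ftc (by norm_num) (by norm_num) le_rfl
        (fun x _ => (hqker 3 (by omega) x).hasDerivWithinAt)
        (qker_contOn 3 (by omega) (by omega) _)
    have hz : (∫ x in (0:ℝ)..(1/2), pker 3 x) + (∫ x in (1/2:ℝ)..1, qker 3 x) = 0 := by
      rw [hzP, hzQ]
      norm_num [pker_four, qker_four]
    have FB := final_bound 3 (by norm_num) f hf γ (7/20250 + 19 * Real.sqrt 19 / 81000) hγ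
      (pker 3) (qker 3)
      (pker_contOn 3 (by omega) (by omega) _) (qker_contOn 3 (by omega) (by omega) _)
      p3_bound q3_bound hz
    have hE : (∫ x in (0:ℝ)..1, f x) - (7 * f 0 + 16 * f (1/2) + 7 * f 1) / 30
        + (iteratedDerivWithin 1 f (Set.Icc 0 1) 1 - iteratedDerivWithin 1 f (Set.Icc 0 1) 0) / 60
        = -(IP + IQ) := by
      linarith [P, Q, hsplit]
    rw [hE, abs_neg]
    have hpB : peanoB 3 = 7/20250 + 19 * Real.sqrt 19 / 81000 := rfl
    rw [show (3:ℕ) - 1 = 2 from rfl, hpB, hIP, hIQ]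
    exact FB
  · -- k = 4
    have P := piece 4 (by norm_num) f hf pker rfl (fun j hj x => hpker j (by omega) x)
      0 (1/2) le_rfl (by norm_num) (by norm_num)
    have Q := piece 4 (by norm_num) f hf qker rfl (fun j hj x => hqker j (by omega) x)
      (1/2) 1 (by norm_num) (by norm_num) le_rfl
    set IP := ∫ x in (0:ℝ)..(1/2), pker 4 x * iteratedDerivWithin 4 f (Set.Icc 0 1) x with hIP
    set IQ := ∫ x in (1/2:ℝ)..1, qker 4 x * iteratedDerivWithin 4 f (Set.Icc 0 1) x with hIQ
    simp only [Finset.sum_range_succ, Finset.sum_range_zero, iteratedDerivWithin_zero] at P Q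
    norm_num [pker_one, pker_two, pker_three, pker_four, qker_one, qker_two, qker_three,
      qker_four] at P Q
    have hzP : ∫ x in (0:ℝ)..(1/2), pker 4 x = pker 5 (1/2) - pker 5 0 :=
      ftc le_rfl (by norm_num) (by norm_num)
        (fun x _ => (hpker 4 (by omega) x).hasDerivWithinAt)
        (pker_contOn 4 (by omega) (by omega) _)
    have hzQ : ∫ x in (1/2:ℝ)..1, qker 4 x = qker 5 1 - qker 5 (1/2) :=
      ftc (by norm_num) (by norm_num) le_rfl
        (fun x _ => (hqker 4 (by omega) x).hasDerivWithinAt)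
        (qker_contOn 4 (by omega) (by omega) _)
    have hz : (∫ x in (0:ℝ)..(1/2), pker 4 x) + (∫ x in (1/2:ℝ)..1, qker 4 x) = 0 := by
      rw [hzP, hzQ]
      norm_num [pker_five, qker_five]
    have FB := final_bound 4 (by norm_num) f hf γ (1/5760) hγ (pker 4) (qker 4)
      (pker_contOn 4 (by omega) (by omega) _) (qker_contOn 4 (by omega) (by omega) _)
      p4_bound q4_bound hz
    have hE : (∫ x in (0:ℝ)..1, f x) - (7 * f 0 + 16 * f (1/2) + 7 * f 1) / 30
        + (iteratedDerivWithin 1 f (Set.Icc 0 1) 1 - iteratedDerivWithin 1 f (Set.Icc 0 1) 0) / 60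
        = IP + IQ := by
      linarith [P, Q, hsplit]
    rw [hE]
    have hpB : peanoB 4 = 1/5760 := rfl
    rw [show (4:ℕ) - 1 = 3 from rfl, hpB, hIP, hIQ]
    exact FB
  · -- k = 5
    have P := piece 5 (by norm_num) f hf pker rfl (fun j hj x => hpker j (by omega) x)
      0 (1/2) le_rfl (by norm_num) (by norm_num)
    have Q := piece 5 (by norm_num) f hf qker rfl (fun j hj x => hqker j (by omega) x)
      (1/2) 1 (by norm_num) (by norm_num) le_rfl
    set IP := ∫ x in (0:ℝ)..(1/2), pker 5 x * iteratedDerivWithin 5 f (Set.Icc 0 1) x with hIP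
    set IQ := ∫ x in (1/2:ℝ)..1, qker 5 x * iteratedDerivWithin 5 f (Set.Icc 0 1) x with hIQ
    simp only [Finset.sum_range_succ, Finset.sum_range_zero, iteratedDerivWithin_zero] at P Q
    norm_num [pker_one, pker_two, pker_three, pker_four, pker_five, qker_one, qker_two,
      qker_three, qker_four, qker_five] at P Q
    have hzP : ∫ x in (0:ℝ)..(1/2), pker 5 x = pker 6 (1/2) - pker 6 0 :=
      ftc le_rfl (by norm_num) (by norm_num)
        (fun x _ => (hpker 5 (by omega) x).hasDerivWithinAt)
        (pker_contOn 5 (by omega) (by omega) _)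
    have hzQ : ∫ x in (1/2:ℝ)..1, qker 5 x = qker 6 1 - qker 6 (1/2) :=
      ftc (by norm_num) (by norm_num) le_rfl
        (fun x _ => (hqker 5 (by omega) x).hasDerivWithinAt)
        (qker_contOn 5 (by omega) (by omega) _)
    have hz : (∫ x in (0:ℝ)..(1/2), pker 5 x) + (∫ x in (1/2:ℝ)..1, qker 5 x) = 0 := by
      rw [hzP, hzQ]
      norm_num [pker_six, qker_six]
    have FB := final_bound 5 (by norm_num) f hf γ (1/58320) hγ (pker 5) (qker 5)
      (pker_contOn 5 (by omega) (by omega) _) (qker_contOn 5 (by omega) (by omega) _)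
      p5_bound q5_bound hz
    have hE : (∫ x in (0:ℝ)..1, f x) - (7 * f 0 + 16 * f (1/2) + 7 * f 1) / 30
        + (iteratedDerivWithin 1 f (Set.Icc 0 1) 1 - iteratedDerivWithin 1 f (Set.Icc 0 1) 0) / 60
        = -(IP + IQ) := by
      linarith [P, Q, hsplit]
    rw [hE, abs_neg]
    have hpB : peanoB 5 = 1/58320 := rfl
    rw [show (5:ℕ) - 1 = 4 from rfl, hpB, hIP, hIQ]
    exact FB
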